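/- arXiv:1011.4285 — 2 statements merged into one kernel-verified Lean document; each statement's English description precedes it below -/
import Mathlib

section
/- Let k be a commutative ring, A an associative unital k-algebra, C a commutative k-subalgebra of A, R ∈ (A⊗A)^× and K ∈ (C⊗C)^×, and assume that K^{1,2}K^{1,3} commutes with R^{2,3} in A^{⊗3}. Then for every n ≥ 3, the following identity holds in A^{⊗n} (slots numbered 1,…,n, products in increasing order of i): (∏_{i=3}^{n} (R^{2,i})^{-1}) · (∏_{i=2}^{n} K^{1,i}) = (∏_{i=2}^{n} K^{1,i}) · (∏_{i=3}^{n} (R^{2,i})^{-1}). -/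
/-!
STATEMENT 2: If `K^{1,2}K^{1,3}` commutes with `R^{2,3}` (in `A^{⊗3}`), then in `A^{⊗n}`
`(∏_{i=3}^{n} (R^{2,i})⁻¹) · (∏_{i=2}^{n} K^{1,i}) = (∏_{i=2}^{n} K^{1,i}) · (∏_{i=3}^{n} (R^{2,i})⁻¹)`,
where `K` lies in (the image of) `C ⊗ C` for a commutative subalgebra `C ⊆ A`.
-/

open scoped TensorProduct

noncomputable section

variable (k : Type*) [CommRing k]
variable (A : Type*) [Ring A] [Algebra k A]
variable (n : ℕ)

/-- `A^{⊗n}`. -/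
abbrev TPow := ⨂[k] (_ : Fin n), A

/-- distinct slot inclusions of `A` into `A^{⊗n}` have commuting ranges. -/
theorem commute_single {i j : Fin n} (h : i ≠ j) (a b : A) :
    Commute ((PiTensorProduct.singleAlgHom (R := k) (A := fun _ : Fin n => A) i) a)
      ((PiTensorProduct.singleAlgHom (R := k) (A := fun _ : Fin n => A) j) b) := by
  have h1 : Commute (Pi.mulSingle (M := fun _ : Fin n => A) i a)
      (Pi.mulSingle (M := fun _ : Fin n => A) j b) :=
    Pi.mulSingle_commute (f := fun _ : Fin n => A) h a b
  simpa [PiTensorProduct.singleAlgHom, MonoidHom.mulSingle_apply] using h1.tprod (R := k)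

/-- The two-leg embedding `A ⊗ A → A^{⊗n}` placing the two components in
(distinct) slots `i` and `j`. -/
def leg2 (i j : Fin n) (h : i ≠ j) : (A ⊗[k] A) →ₐ[k] TPow k A n :=
  Algebra.TensorProduct.lift
    (PiTensorProduct.singleAlgHom (R := k) (A := fun _ : Fin n => A) i)
    (PiTensorProduct.singleAlgHom (R := k) (A := fun _ : Fin n => A) j)
    (fun a b => commute_single k A n h a b)

/-- `x ↦ x^{i,j}` at the level of units, with slots of `A^{⊗n}` numbered `1, …, n`;
junk value `1` if the indices are out of range or equal. -/
def uleg (i j : ℕ) (u : (A ⊗[k] A)ˣ) : (TPow k A n)ˣ :=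
  if h : 1 ≤ i ∧ i ≤ n ∧ 1 ≤ j ∧ j ≤ n ∧ i ≠ j then
    Units.map (leg2 k A n ⟨i - 1, by omega⟩ ⟨j - 1, by omega⟩
      (Fin.ne_of_val_ne (by simp only []; omega))).toMonoidHom u
  else 1

/-- The ordered product `∏_{i=a}^{b} f i` (in increasing order of `i`). -/
def ordProd {M : Type*} [Monoid M] (a b : ℕ) (f : ℕ → M) : M :=
  ((List.range' a (b + 1 - a)).map f).prod


/-!
Both tensor factors of `K` lie in the image of the commutative algebra `C`, so the legs `K^{1,j}`
commute pairwise. Hence `R^{2,i}` only has to be moved past `K^{1,2}K^{1,i}`, which is the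
hypothesis transported from `A^{⊗3}` to `A^{⊗n}` along the slot embedding `1, 2, 3 ↦ 1, 2, i`,
and past the `K^{1,j}` with `j ∉ {2, i}`, whose slots are disjoint from those of `R^{2,i}`.
-/

theorem Function.Injective.extend_update {ι κ M : Type*} [DecidableEq ι] [DecidableEq κ]
    {σ : ι → κ} (hσ : σ.Injective) (a : ι → M) (e : κ → M) (i : ι) (x : M) :
    Function.extend σ (Function.update a i x) e
      = Function.update (Function.extend σ a e) (σ i) x := by
  funext j
  by_cases hj : ∃ i', σ i' = j
  · obtain ⟨i', rfl⟩ := hj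
    simp only [hσ.extend_apply, Function.update_apply, hσ.eq_iff]
  · have hji : j ≠ σ i := fun h => hj ⟨i, h.symm⟩
    rw [Function.extend_apply' _ _ _ hj, Function.update_of_ne hji,
      Function.extend_apply' _ _ _ hj]

namespace PiTensorProduct

variable {A} {ι κ : Type*} {σ : ι → κ}

def extendMultilinearMap (hσ : σ.Injective) :
    MultilinearMap k (fun _ : ι => A) (⨂[k] _ : κ, A) where
  toFun a := tprod k (Function.extend σ a 1)
  map_update_add' a i x y := by
    classical
    simp only [hσ.extend_update]
    exact MultilinearMap.map_update_add _ _ _ _ _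
  map_update_smul' a i c x := by
    classical
    simp only [hσ.extend_update]
    exact MultilinearMap.map_update_smul _ _ _ _ _

def extendAlgHom (hσ : σ.Injective) : (⨂[k] _ : ι, A) →ₐ[k] ⨂[k] _ : κ, A :=
  liftAlgHom (extendMultilinearMap k hσ)
    (by simp [extendMultilinearMap, Function.extend_one, one_def])
    (fun x y => by
      simp only [extendMultilinearMap, MultilinearMap.coe_mk]
      rw [tprod_mul_tprod, ← Function.extend_mul, mul_one])

theorem extendAlgHom_singleAlgHom [DecidableEq ι] [DecidableEq κ] (hσ : σ.Injective) (i : ι)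
    (a : A) :
    extendAlgHom k hσ (singleAlgHom i a) = singleAlgHom (σ i) a := by
  simp [extendAlgHom, extendMultilinearMap, Pi.mulSingle, hσ.extend_update, Function.extend_one]

end PiTensorProduct

theorem TensorProduct.commute_of_commute_tmul {R M N P Q B : Type*} [CommSemiring R]
    [AddCommMonoid M] [AddCommMonoid N] [AddCommMonoid P] [AddCommMonoid Q] [Semiring B]
    [Module R M] [Module R N] [Module R P] [Module R Q] [Module R B]
    (φ : M ⊗[R] N →ₗ[R] B) (ψ : P ⊗[R] Q →ₗ[R] B)
    (h : ∀ m n p q, Commute (φ (m ⊗ₜ n)) (ψ (p ⊗ₜ q))) (x : M ⊗[R] N) (y : P ⊗[R] Q) :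
    Commute (φ x) (ψ y) := by
  induction x with
  | zero => simp
  | add x x' hx hx' => rw [map_add]; exact hx.add_left hx'
  | tmul m n =>
    induction y with
    | zero => simp
    | add y y' hy hy' => rw [map_add]; exact hy.add_right hy'
    | tmul p q => exact h m n p q

variable {A n}

theorem commute_singleAlgHom_of_commute {i j : Fin n} {a b : A} (hab : Commute a b) :
    Commute ((PiTensorProduct.singleAlgHom (R := k) (A := fun _ : Fin n => A) i) a)
      ((PiTensorProduct.singleAlgHom (R := k) (A := fun _ : Fin n => A) j) b) := by
  obtain rfl | hij := eq_or_ne i j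
  · exact hab.map _
  · exact commute_single k A n hij a b

@[simp]
theorem leg2_tmul {i j : Fin n} (h : i ≠ j) (a b : A) :
    leg2 k A n i j h (a ⊗ₜ b)
      = PiTensorProduct.singleAlgHom (R := k) (A := fun _ : Fin n => A) i a
        * PiTensorProduct.singleAlgHom (R := k) (A := fun _ : Fin n => A) j b :=
  Algebra.TensorProduct.lift_tmul _ _ _ _ _

theorem commute_leg2_of_disjoint {i j p q : Fin n} (hij : i ≠ j) (hpq : p ≠ q)
    (hip : i ≠ p) (hiq : i ≠ q) (hjp : j ≠ p) (hjq : j ≠ q) (x y : A ⊗[k] A) :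
    Commute (leg2 k A n i j hij x) (leg2 k A n p q hpq y) := by
  refine TensorProduct.commute_of_commute_tmul (leg2 k A n i j hij).toLinearMap
    (leg2 k A n p q hpq).toLinearMap (fun a b c d => ?_) x y
  simp only [AlgHom.toLinearMap_apply, leg2_tmul]
  exact ((commute_single k A n hip a c).mul_right (commute_single k A n hiq a d)).mul_left
    ((commute_single k A n hjp b c).mul_right (commute_single k A n hjq b d))

theorem commute_leg2_map_of_eq_left {C : Type*} [CommSemiring C] [Algebra k C] (f : C →ₐ[k] A)
    {i j j' : Fin n} (hj : i ≠ j) (hj' : i ≠ j') (u v : C ⊗[k] C) :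
    Commute (leg2 k A n i j hj (Algebra.TensorProduct.map f f u))
      (leg2 k A n i j' hj' (Algebra.TensorProduct.map f f v)) := by
  have hf : ∀ c d, Commute (f c) (f d) := fun c d => (Commute.all c d).map f
  refine TensorProduct.commute_of_commute_tmul
    ((leg2 k A n i j hj).toLinearMap ∘ₗ (Algebra.TensorProduct.map f f).toLinearMap)
    ((leg2 k A n i j' hj').toLinearMap ∘ₗ (Algebra.TensorProduct.map f f).toLinearMap)
    (fun a b c d => ?_) u v
  simp only [LinearMap.comp_apply, AlgHom.toLinearMap_apply, Algebra.TensorProduct.map_tmul,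
    leg2_tmul]
  exact ((commute_singleAlgHom_of_commute k (hf a c)).mul_right
    (commute_single k A n hj' _ _)).mul_left
    ((commute_single k A n hj.symm _ _).mul_right (commute_singleAlgHom_of_commute k (hf b d)))

theorem extendAlgHom_leg2 {m : ℕ} {σ : Fin m → Fin n} (hσ : σ.Injective) {i j : Fin m}
    (h : i ≠ j) (x : A ⊗[k] A) :
    PiTensorProduct.extendAlgHom k hσ (leg2 k A m i j h x)
      = leg2 k A n (σ i) (σ j) (hσ.ne h) x := by
  induction x with
  | zero => simp
  | add x y hx hy => rw [map_add, map_add, map_add, hx, hy]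
  | tmul a b =>
    rw [leg2_tmul, leg2_tmul, map_mul, PiTensorProduct.extendAlgHom_singleAlgHom,
      PiTensorProduct.extendAlgHom_singleAlgHom]

theorem commute_uleg_of_disjoint {i j p q : ℕ} (hip : i ≠ p) (hiq : i ≠ q) (hjp : j ≠ p)
    (hjq : j ≠ q) (x y : (A ⊗[k] A)ˣ) : Commute (uleg k A n i j x) (uleg k A n p q y) := by
  unfold uleg
  split_ifs
  · refine Commute.units_of_val (commute_leg2_of_disjoint k _ _ ?_ ?_ ?_ ?_ _ _) <;>
      simp only [ne_eq, Fin.mk.injEq] <;> omega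
  all_goals simp

theorem commute_uleg_map_of_eq_left {C : Type*} [CommSemiring C] [Algebra k C] (f : C →ₐ[k] A)
    (i j j' : ℕ) (u v : (C ⊗[k] C)ˣ) :
    Commute (uleg k A n i j (Units.map (Algebra.TensorProduct.map f f).toMonoidHom u))
      (uleg k A n i j' (Units.map (Algebra.TensorProduct.map f f).toMonoidHom v)) := by
  unfold uleg
  split_ifs
  · exact Commute.units_of_val (commute_leg2_map_of_eq_left k f _ _ _ _)
  all_goals simp

theorem map_uleg {m : ℕ} {σ : Fin m → Fin n} (hσ : σ.Injective) {p q : Fin m} (hpq : p ≠ q)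
    (u : (A ⊗[k] A)ˣ) :
    Units.map (PiTensorProduct.extendAlgHom k hσ).toMonoidHom (uleg k A m (p + 1) (q + 1) u)
      = uleg k A n (σ p + 1) (σ q + 1) u := by
  have hpq' : (p : ℕ) ≠ q := Fin.val_ne_of_ne hpq
  have hσpq : (σ p : ℕ) ≠ σ q := Fin.val_ne_of_ne (hσ.ne hpq)
  ext
  simp only [uleg, Nat.add_sub_cancel, Units.coe_map]
  rw [dif_pos (by omega), dif_pos (by omega)]
  exact extendAlgHom_leg2 k hσ hpq _

theorem commute_uleg_of_commute_uleg_three {x y : (A ⊗[k] A)ˣ}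
    (h : Commute (uleg k A 3 1 2 x * uleg k A 3 1 3 x) (uleg k A 3 2 3 y)) {i : ℕ}
    (h3i : 3 ≤ i) (hin : i ≤ n) :
    Commute (uleg k A n 1 2 x * uleg k A n 1 i x) (uleg k A n 2 i y) := by
  let σ : Fin 3 → Fin n := ![⟨0, by omega⟩, ⟨1, by omega⟩, ⟨i - 1, by omega⟩]
  have hσ : σ.Injective := by
    intro a b hab
    fin_cases a <;> fin_cases b <;> simp [σ, Fin.ext_iff] at hab ⊢ <;> omega
  have hσ2 : (σ 2 : ℕ) + 1 = i := by simp [σ]; omega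
  let φ := Units.map (PiTensorProduct.extendAlgHom k (A := A) hσ).toMonoidHom
  have h12 : φ (uleg k A 3 1 2 x) = uleg k A n 1 2 x :=
    map_uleg k hσ (p := 0) (q := 1) (by decide) x
  have h13 : φ (uleg k A 3 1 3 x) = uleg k A n 1 i x := by
    rw [← hσ2]; exact map_uleg k hσ (p := 0) (q := 2) (by decide) x
  have h23 : φ (uleg k A 3 2 3 y) = uleg k A n 2 i y := by
    rw [← hσ2]; exact map_uleg k hσ (p := 1) (q := 2) (by decide) y
  simpa only [map_mul, h12, h13, h23] using h.map φ

theorem commute_list_prod_map_cons {M α : Type*} [Monoid M] [DecidableEq α] {f : α → M}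
    (hf : ∀ a b, Commute (f a) (f b)) {x : M} {a i : α} {l : List α} (hi : i ∈ l)
    (hai : Commute x (f a * f i)) (hl : ∀ j ∈ l.erase i, Commute x (f j)) :
    Commute x ((a :: l).map f).prod := by
  have hperm : (l.map f).prod = f i * ((l.erase i).map f).prod := by
    rw [((List.perm_cons_erase hi).map f).prod_eq'
      (List.pairwise_map.2 (List.pairwise_of_forall hf)), List.map_cons, List.prod_cons]
  rw [List.map_cons, List.prod_cons, hperm, ← mul_assoc]
  exact hai.mul_right (Commute.list_prod_right _ _ (by simpa using hl))

theorem Commute.ordProd_left {M : Type*} [Monoid M] {f : ℕ → M} {x : M} {a b : ℕ}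
    (h : ∀ i, a ≤ i → i ≤ b → Commute (f i) x) : Commute (ordProd a b f) x :=
  Commute.list_prod_left _ _ <| by
    simp only [List.mem_map, List.mem_range'_1]
    rintro _ ⟨i, hi, rfl⟩
    exact h i hi.1 (by omega)

theorem commute_ordProd_of_commute_mul {M : Type*} [Monoid M] {f : ℕ → M}
    (hf : ∀ a b, Commute (f a) (f b)) {x : M} {a b i : ℕ} (hai : a < i) (hib : i ≤ b)
    (hxi : Commute x (f a * f i)) (hx : ∀ j, a < j → j ≤ b → j ≠ i → Commute x (f j)) :
    Commute x (ordProd a b f) := by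
  unfold ordProd
  rw [show b + 1 - a = b - a + 1 by omega, List.range'_succ]
  refine commute_list_prod_map_cons hf (List.mem_range'_1.2 (by omega)) hxi fun j hj => ?_
  rw [(List.nodup_range' (s := a + 1)).mem_erase_iff, List.mem_range'_1] at hj
  exact hx j (by omega) (by omega) hj.1

theorem prod_K_commutes_with_prod_Rinv
    (C : Type*) [CommRing C] [Algebra k C]
    (f : C →ₐ[k] A)
    (hn : 3 ≤ n)
    (R : (A ⊗[k] A)ˣ) (K : (C ⊗[k] C)ˣ)
    -- `K` viewed inside `A ⊗ A`
    (KA : (A ⊗[k] A)ˣ)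
    (hKA : KA = Units.map (Algebra.TensorProduct.map f f).toMonoidHom K)
    -- `K^{1,2}K^{1,3}` commutes with `R^{2,3}` in `A^{⊗3}`
    (hcomm : Commute (uleg k A 3 1 2 KA * uleg k A 3 1 3 KA) (uleg k A 3 2 3 R)) :
    ordProd 3 n (fun i => (uleg k A n 2 i R)⁻¹) * ordProd 2 n (fun i => uleg k A n 1 i KA) =
      ordProd 2 n (fun i => uleg k A n 1 i KA) *
        ordProd 3 n (fun i => (uleg k A n 2 i R)⁻¹) := by
  have hK : ∀ a b, Commute (uleg k A n 1 a KA) (uleg k A n 1 b KA) := by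
    subst hKA
    exact fun a b => commute_uleg_map_of_eq_left k f 1 a b K K
  refine (Commute.ordProd_left fun i h3i hin => Commute.inv_left ?_).eq
  refine commute_ordProd_of_commute_mul hK (by omega : 2 < i) hin
    (commute_uleg_of_commute_uleg_three k hcomm h3i hin).symm fun j _ _ hji => ?_
  exact commute_uleg_of_disjoint k (by omega) (by omega) (by omega) hji.symm _ _

end
end

section
/- Let k be a commutative ring containing ℚ, let H be a commutative k-algebra, let m : H⊗H → H be the multiplication, and let t ∈ H⊗H be symmetric (τ(t) = t, where τ is the flip). Let Δ : H → H⊗H be a k-algebra morphism such that (id⊗Δ)(t) = t^{1,2} + t^{1,3} in H^{⊗3} and Δ(m(t)) = m(t)⊗1 + 1⊗m(t) + 2t. Then in the power series algebra (H^{⊗3})[[ℏ]] one has (id_H⊗Δ)( exp(ℏ·(t^{1,2} + (1/2)t^{2,2})) ) = exp(ℏ·(t^{1,2} + (1/2)t^{2,2})) · exp(ℏ·(t^{1,3} + (1/2)t^{3,3})) · exp(ℏ·t^{2,3}), where (id_H⊗Δ) is extended ℏ-linearly from H^{⊗2} to (H^{⊗2})[[ℏ]] → (H^{⊗3})[[ℏ]].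 -/
/-
Since `H⊗H⊗H` is commutative, `pexp` turns sums into products, so the identity reduces to one
between exponents. By `hcop` and `hmt`, `id⊗Δ` sends `t` to `t^{1,2} + t^{1,3}` and `1 ⊗ m(t)`
to `m(t)^{2,2} + m(t)^{3,3} + 2 t^{2,3}`; halving the latter gives exactly the sum of the three
exponents on the right.
-/

open scoped TensorProduct

noncomputable section

variable (k : Type*) [CommRing k] [Algebra ℚ k]
variable (H : Type*) [CommRing H] [Algebra k H]

/-- `exp(ℏ·x)` as a formal power series in `ℏ` with coefficients `xⁿ/n!`. -/
def pexp {T : Type*} [CommRing T] [Algebra k T] (x : T) : PowerSeries T :=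
  PowerSeries.mk fun n => (algebraMap ℚ k ((n.factorial : ℚ)⁻¹)) • x ^ n

/-- leg map `x ↦ x^{1,2}` from `H⊗H` to `H⊗H⊗H`. -/
def leg12 : H ⊗[k] H →ₐ[k] H ⊗[k] (H ⊗[k] H) :=
  Algebra.TensorProduct.map (AlgHom.id k H) Algebra.TensorProduct.includeLeft

/-- leg map `x ↦ x^{1,3}` from `H⊗H` to `H⊗H⊗H`. -/
def leg13 : H ⊗[k] H →ₐ[k] H ⊗[k] (H ⊗[k] H) :=
  Algebra.TensorProduct.map (AlgHom.id k H) Algebra.TensorProduct.includeRight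

/-- leg map `x ↦ x^{2,3}` from `H⊗H` to `H⊗H⊗H`. -/
def leg23 : H ⊗[k] H →ₐ[k] H ⊗[k] (H ⊗[k] H) :=
  Algebra.TensorProduct.includeRight

/-- inclusion of `H` into slot 2 of `H⊗H⊗H`. -/
def slot2 : H →ₐ[k] H ⊗[k] (H ⊗[k] H) :=
  (Algebra.TensorProduct.includeRight).comp Algebra.TensorProduct.includeLeft

/-- inclusion of `H` into slot 3 of `H⊗H⊗H`. -/
def slot3 : H →ₐ[k] H ⊗[k] (H ⊗[k] H) :=
  (Algebra.TensorProduct.includeRight).comp Algebra.TensorProduct.includeRight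

open PowerSeries Algebra.TensorProduct

section Exponential

variable {T : Type*} [CommRing T] [Algebra k T]

theorem pexp_eq_rescale_exp [Algebra ℚ T] [IsScalarTower ℚ k T] (x : T) :
    pexp k x = rescale x (exp T) := by
  ext n
  rw [pexp, coeff_mk, coeff_rescale, coeff_exp, one_div, ← smul_eq_mul, algebraMap_smul,
    algebra_compatible_smul T, smul_eq_mul, smul_eq_mul, mul_comm]

theorem pexp_add (a b : T) : pexp k (a + b) = pexp k a * pexp k b := by
  let : Algebra ℚ T := ((algebraMap k T).comp (algebraMap ℚ k)).toAlgebra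
  have : IsScalarTower ℚ k T := .of_algebraMap_eq fun _ => rfl
  simp only [pexp_eq_rescale_exp, exp_mul_exp_eq_exp_add]

theorem map_pexp {S : Type*} [CommRing S] [Algebra k S] (f : T →ₐ[k] S) (x : T) :
    PowerSeries.map f.toRingHom (pexp k x) = pexp k (f x) := by
  ext n
  simp [pexp, coeff_map, map_pow]

end Exponential

theorem algebraMap_half_smul_two_nsmul {M : Type*} [AddCommGroup M] [Module k M] (x : M) :
    algebraMap ℚ k (1 / 2) • (2 • x) = x := by
  rw [two_nsmul, ← two_smul k x, smul_smul, ← map_ofNat (algebraMap ℚ k) 2, ← map_mul]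
  norm_num

omit [Algebra ℚ k] in
theorem map_id_includeRight (Δ : H →ₐ[k] H ⊗[k] H) {h : H} {c : H ⊗[k] H}
    (hΔ : Δ h = h ⊗ₜ 1 + 1 ⊗ₜ h + c) :
    map (AlgHom.id k H) Δ (includeRight h) = slot2 k H h + slot3 k H h + leg23 k H c := by
  simp [hΔ, slot2, slot3, leg23, TensorProduct.tmul_add]

theorem coproduct_of_exponential
    (Δ : H →ₐ[k] H ⊗[k] H) (t : H ⊗[k] H)
    (hcop : (Algebra.TensorProduct.map (AlgHom.id k H) Δ) t = leg12 k H t + leg13 k H t)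
    (hmt : Δ ((Algebra.TensorProduct.lmul' k (S := H)) t) =
      ((Algebra.TensorProduct.lmul' k (S := H)) t) ⊗ₜ[k] 1
        + 1 ⊗ₜ[k] ((Algebra.TensorProduct.lmul' k (S := H)) t) + 2 • t) :
    PowerSeries.map ((Algebra.TensorProduct.map (AlgHom.id k H) Δ).toRingHom)
        (pexp k (t + (algebraMap ℚ k (1/2)) •
          (Algebra.TensorProduct.includeRight ((Algebra.TensorProduct.lmul' k (S := H)) t)))) =
      pexp k (leg12 k H t + (algebraMap ℚ k (1/2)) •
          (slot2 k H ((Algebra.TensorProduct.lmul' k (S := H)) t)))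
        * pexp k (leg13 k H t + (algebraMap ℚ k (1/2)) •
          (slot3 k H ((Algebra.TensorProduct.lmul' k (S := H)) t)))
        * pexp k (leg23 k H t) := by
  rw [map_pexp, ← pexp_add, ← pexp_add]
  congr 1
  rw [map_add, map_smul, hcop, map_id_includeRight k H Δ hmt, map_nsmul, smul_add, smul_add,
    algebraMap_half_smul_two_nsmul]
  abel

end
end
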